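/- arXiv:1611.03090 — 2 statements merged into one kernel-verified Lean document; each statement's English description precedes it below -/
import Mathlib

section
/- Let O ∈ ℝ², 0 < r < R, and let α = (a, s) and β = (b, t) be circles lying strictly inside the annulus (r + s < dist O a, dist O a + s < R, r + t < dist O b, dist O b + t < R) with ⟪a − O, b − O⟫ = 0 (perpendicular diameters). Suppose there exist four pairwise distinct annulus solutions of type B, each tangent to both α and β. Then there do NOT exist three pairwise distinct annulus solutions of type A each tangent to both α and β. -/
noncomputable section

/-- The Euclidean plane. -/
abbrev Plane := EuclideanSpace ℝ (Fin 2)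

/-- Two circles (center, radius) are tangent: they are distinct and the distance between
centers equals the sum (external) or the absolute difference (internal) of the radii. -/
def Tangent (A B : Plane × ℝ) : Prop :=
  A ≠ B ∧ (dist A.1 B.1 = A.2 + B.2 ∨ dist A.1 B.1 = |A.2 - B.2|)

/-- Annulus solution of type A for the concentric circles (O, r), (O, R): tangent
externally to the inner circle and internally to the outer one. -/
def TypeA (O : Plane) (r R : ℝ) (d : Plane × ℝ) : Prop :=
  dist O d.1 = r + d.2 ∧ dist O d.1 = R - d.2

/-- Annulus solution of type B for the concentric circles (O, r), (O, R): contains the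
inner circle and lies inside the outer one. -/
def TypeB (O : Plane) (r R : ℝ) (d : Plane × ℝ) : Prop :=
  dist O d.1 = d.2 - r ∧ dist O d.1 = R - d.2

lemma dist_sq (x y : Plane) : dist x y ^ 2 = (x 0 - y 0)^2 + (x 1 - y 1)^2 := by
  rw [EuclideanSpace.dist_eq, Real.sq_sqrt (by positivity)]
  simp [Fin.sum_univ_two, Real.dist_eq, sq_abs]

lemma plane_ext {x y : Plane} (h0 : x 0 = y 0) (h1 : x 1 = y 1) : x = y := by
  ext i; fin_cases i <;> assumption

lemma core (X0 X1 A0 A1 B0 B1 : ℝ) (hAB : A0*B0 + A1*B1 = 0) (hA : A0^2 + A1^2 ≠ 0) :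
    (X0^2+X1^2)*((A0^2+A1^2)*(B0^2+B1^2)) =
      (X0*A0+X1*A1)^2*(B0^2+B1^2) + (X0*B0+X1*B1)^2*(A0^2+A1^2) := by
  have h : ((X0^2+X1^2)*((A0^2+A1^2)*(B0^2+B1^2)) -
      ((X0*A0+X1*A1)^2*(B0^2+B1^2) + (X0*B0+X1*B1)^2*(A0^2+A1^2))) * (A0^2+A1^2) = 0 := by
    linear_combination ((X0*A1-X1*A0)^2*(A0*B0+A1*B1)
      - 2*(X0*A1-X1*A0)*(B0*A1-B1*A0)*(X0*A0+X1*A1)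
      - (X0*A0+X1*A1)^2*(A0*B0+A1*B1)) * hAB
  have := (mul_eq_zero.mp h).resolve_right hA
  linarith

lemma inj_core (x0 x1 y0 y1 o0 o1 a0 a1 b0 b1 : ℝ)
    (hperp : (a0-o0)*(b0-o0) + (a1-o1)*(b1-o1) = 0)
    (hA : (a0-o0)^2+(a1-o1)^2 ≠ 0) (hB : (b0-o0)^2+(b1-o1)^2 ≠ 0)
    (ho : (x0-o0)^2+(x1-o1)^2 = (y0-o0)^2+(y1-o1)^2)
    (ha : (x0-a0)^2+(x1-a1)^2 = (y0-a0)^2+(y1-a1)^2)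
    (hb : (x0-b0)^2+(x1-b1)^2 = (y0-b0)^2+(y1-b1)^2) :
    x0 = y0 ∧ x1 = y1 := by
  have e1 : (x0-y0)*(a0-o0) + (x1-y1)*(a1-o1) = 0 := by linear_combination (ho - ha)/2
  have e2 : (x0-y0)*(b0-o0) + (x1-y1)*(b1-o1) = 0 := by linear_combination (ho - hb)/2
  have hc := core (x0-y0) (x1-y1) (a0-o0) (a1-o1) (b0-o0) (b1-o1) hperp hA
  rw [e1, e2] at hc
  have hz : ((x0-y0)^2+(x1-y1)^2) * (((a0-o0)^2+(a1-o1)^2)*((b0-o0)^2+(b1-o1)^2)) = 0 := by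
    linear_combination hc
  have hz2 := (mul_eq_zero.mp hz).resolve_right (mul_ne_zero hA hB)
  have h3 := (add_eq_zero_iff_of_nonneg (sq_nonneg (x0-y0)) (sq_nonneg (x1-y1))).mp hz2
  exact ⟨sub_eq_zero.mp (pow_eq_zero_iff two_ne_zero |>.mp h3.1),
    sub_eq_zero.mp (pow_eq_zero_iff two_ne_zero |>.mp h3.2)⟩

lemma sq_core (x0 x1 y0 y1 o0 o1 a0 a1 b0 b1 : ℝ)
    (hperp : (a0-o0)*(b0-o0) + (a1-o1)*(b1-o1) = 0)
    (hA : (a0-o0)^2+(a1-o1)^2 ≠ 0)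
    (ho : (x0-o0)^2+(x1-o1)^2 = (y0-o0)^2+(y1-o1)^2)
    (ha : (x0-a0)^2+(x1-a1)^2 = (y0-a0)^2+(y1-a1)^2) :
    ((x0-b0)^2+(x1-b1)^2 - ((y0-b0)^2+(y1-b1)^2)) *
      ((x0-b0)^2+(x1-b1)^2 + ((y0-b0)^2+(y1-b1)^2)
        - 2*((x0-o0)^2+(x1-o1)^2) - 2*((b0-o0)^2+(b1-o1)^2)) = 0 := by
  have e1 : (x0-o0)*(a0-o0) + (x1-o1)*(a1-o1) = (y0-o0)*(a0-o0) + (y1-o1)*(a1-o1) := by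
    linear_combination (ho - ha)/2
  have hcx := core (x0-o0) (x1-o1) (a0-o0) (a1-o1) (b0-o0) (b1-o1) hperp hA
  have hcy := core (y0-o0) (y1-o1) (a0-o0) (a1-o1) (b0-o0) (b1-o1) hperp hA
  have h : (((x0-o0)*(b0-o0)+(x1-o1)*(b1-o1))^2
      - ((y0-o0)*(b0-o0)+(y1-o1)*(b1-o1))^2) * ((a0-o0)^2+(a1-o1)^2) = 0 := by
    linear_combination hcy - hcx
      + ((a0-o0)^2+(a1-o1)^2)*((b0-o0)^2+(b1-o1)^2)*ho
      - ((x0-o0)*(a0-o0) + (x1-o1)*(a1-o1) + (y0-o0)*(a0-o0) + (y1-o1)*(a1-o1))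
          *((b0-o0)^2+(b1-o1)^2)*e1
  have h2 := (mul_eq_zero.mp h).resolve_right hA
  linear_combination 4*h2
    - ((x0-o0)^2+(x1-o1)^2 + (y0-o0)^2+(y1-o1)^2
        + 2*((b0-o0)^2+(b1-o1)^2) - 2*((y0-b0)^2+(y1-b1)^2))*ho

lemma pigeon (g h : Fin 3 → ℝ) (v w : ℝ) (hg : ∀ i, g i = v ∨ g i = w)
    (hd : ∀ i j, i ≠ j → g i ≠ g j ∨ h i ≠ h j) :
    ∃ i j, g i = g j ∧ h i ≠ h j := by
  have key : ∀ i j : Fin 3, i ≠ j → g i = g j → ∃ i j, g i = g j ∧ h i ≠ h j :=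
    fun i j hij hgij => ⟨i, j, hgij, (hd i j hij).resolve_left (not_ne_iff.mpr hgij)⟩
  rcases hg 0 with h0 | h0 <;> rcases hg 1 with h1 | h1 <;> rcases hg 2 with h2 | h2
  · exact key 0 1 (by decide) (h0.trans h1.symm)
  · exact key 0 1 (by decide) (h0.trans h1.symm)
  · exact key 0 2 (by decide) (h0.trans h2.symm)
  · exact key 1 2 (by decide) (h1.trans h2.symm)
  · exact key 1 2 (by decide) (h1.trans h2.symm)
  · exact key 0 2 (by decide) (h0.trans h2.symm)
  · exact key 0 1 (by decide) (h0.trans h1.symm)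
  · exact key 0 1 (by decide) (h0.trans h1.symm)

lemma aux (O a b : Plane) (s t M N : ℝ)
    (hperp' : (a 0 - O 0)*(b 0 - O 0) + (a 1 - O 1)*(b 1 - O 1) = 0)
    (hAne : (a 0 - O 0)^2 + (a 1 - O 1)^2 ≠ 0)
    (hBne : (b 0 - O 0)^2 + (b 1 - O 1)^2 ≠ 0)
    (f : Fin 3 → Plane)
    (hO : ∀ i, dist O (f i) ^ 2 = N^2)
    (hta : ∀ i, dist (f i) a ^2 = (M+s)^2 ∨ dist (f i) a ^2 = (M-s)^2)
    (htb : ∀ i, dist (f i) b ^2 = (M+t)^2 ∨ dist (f i) b ^2 = (M-t)^2)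
    (hne : ∀ i j, i ≠ j → f i ≠ f j) :
    M^2 + t^2 = N^2 + dist O b ^ 2 := by
  have hoc : ∀ i j : Fin 3, ((f i) 0 - O 0)^2 + ((f i) 1 - O 1)^2
      = ((f j) 0 - O 0)^2 + ((f j) 1 - O 1)^2 := by
    intro i j
    linear_combination hO i - hO j - dist_sq O (f i) + dist_sq O (f j)
  have hd : ∀ i j : Fin 3, i ≠ j →
      dist (f i) a ^2 ≠ dist (f j) a ^2 ∨ dist (f i) b ^2 ≠ dist (f j) b ^2 := by
    intro i j hij
    by_contra hc
    push_neg at hc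
    obtain ⟨hga, hgb⟩ := hc
    have ha' : ((f i) 0 - a 0)^2 + ((f i) 1 - a 1)^2
        = ((f j) 0 - a 0)^2 + ((f j) 1 - a 1)^2 := by
      linear_combination hga - dist_sq (f i) a + dist_sq (f j) a
    have hb' : ((f i) 0 - b 0)^2 + ((f i) 1 - b 1)^2
        = ((f j) 0 - b 0)^2 + ((f j) 1 - b 1)^2 := by
      linear_combination hgb - dist_sq (f i) b + dist_sq (f j) b
    obtain ⟨h0, h1⟩ := inj_core ((f i) 0) ((f i) 1) ((f j) 0) ((f j) 1) (O 0) (O 1)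
      (a 0) (a 1) (b 0) (b 1) hperp' hAne hBne (hoc i j) ha' hb'
    exact hne i j hij (plane_ext h0 h1)
  obtain ⟨i, j, hga, hhb⟩ := pigeon (fun i => dist (f i) a ^2) (fun i => dist (f i) b ^2)
    ((M+s)^2) ((M-s)^2) hta hd
  have ha' : ((f i) 0 - a 0)^2 + ((f i) 1 - a 1)^2
      = ((f j) 0 - a 0)^2 + ((f j) 1 - a 1)^2 := by
    linear_combination hga - dist_sq (f i) a + dist_sq (f j) a
  have hkey := sq_core ((f i) 0) ((f i) 1) ((f j) 0) ((f j) 1) (O 0) (O 1)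
    (a 0) (a 1) (b 0) (b 1) hperp' hAne (hoc i j) ha'
  have hf1 : ((f i) 0 - b 0)^2 + ((f i) 1 - b 1)^2
      - (((f j) 0 - b 0)^2 + ((f j) 1 - b 1)^2) ≠ 0 := by
    intro hz
    apply hhb
    linear_combination hz + dist_sq (f i) b - dist_sq (f j) b
  have hsum := (mul_eq_zero.mp hkey).resolve_left hf1
  have hsum' : dist (f i) b ^2 + dist (f j) b ^2 = 2*N^2 + 2*dist O b ^2 := by
    linear_combination hsum + dist_sq (f i) b + dist_sq (f j) b + 2*(hO i)
      - 2*(dist_sq O (f i)) - 2*(dist_sq O b)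
  rcases htb i with hi | hi <;> rcases htb j with hj | hj
  · exact absurd (hi.trans hj.symm) hhb
  · linear_combination hsum'/2 - hi/2 - hj/2
  · linear_combination hsum'/2 - hi/2 - hj/2
  · exact absurd (hi.trans hj.symm) hhb

open scoped RealInnerProductSpace in
/-- Lemma 9: two circles inside the annulus on perpendicular diameters with four common
type-B solutions cannot also have three common type-A solutions. -/
theorem perpendicular_diameters_no_three_typeA
    (O a b : Plane) (r R s t : ℝ)
    (hr : 0 < r) (hrR : r < R) (hs : 0 < s) (ht : 0 < t)
    (ha₁ : r + s < dist O a) (ha₂ : dist O a + s < R)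
    (hb₁ : r + t < dist O b) (hb₂ : dist O b + t < R)
    (hperp : ⟪a - O, b - O⟫ = 0)
    (hB : ∃ d : Fin 4 → Plane × ℝ, (∀ i j, i ≠ j → d i ≠ d j) ∧
      ∀ i, 0 < (d i).2 ∧ TypeB O r R (d i) ∧ Tangent (d i) (a, s) ∧ Tangent (d i) (b, t)) :
    ¬ ∃ e : Fin 3 → Plane × ℝ, (∀ i j, i ≠ j → e i ≠ e j) ∧
      ∀ i, 0 < (e i).2 ∧ TypeA O r R (e i) ∧ Tangent (e i) (a, s) ∧ Tangent (e i) (b, t) := by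
  rintro ⟨e, heinj, heprop⟩
  obtain ⟨d, hdinj, hdprop⟩ := hB
  have hdOa : 0 < dist O a := by linarith
  have hdOb : 0 < dist O b := by linarith
  have hperp' : (a 0 - O 0) * (b 0 - O 0) + (a 1 - O 1) * (b 1 - O 1) = 0 := by
    simpa [PiLp.inner_apply, Fin.sum_univ_two, RCLike.inner_apply, conj_trivial,
      mul_comm] using hperp
  have hAne : (a 0 - O 0)^2 + (a 1 - O 1)^2 ≠ 0 := by
    rw [← dist_sq a O]
    exact pow_ne_zero 2 (by rw [dist_comm]; exact ne_of_gt hdOa)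
  have hBne : (b 0 - O 0)^2 + (b 1 - O 1)^2 ≠ 0 := by
    rw [← dist_sq b O]
    exact pow_ne_zero 2 (by rw [dist_comm]; exact ne_of_gt hdOb)
  -- Type B solutions: radius (R+r)/2, center at distance (R-r)/2 from O
  have hρd : ∀ i : Fin 4, (d i).2 = (R+r)/2 := by
    intro i
    have h1 := (hdprop i).2.1.1
    have h2 := (hdprop i).2.1.2
    linarith
  have hBres : ((R+r)/2)^2 + t^2 = ((R-r)/2)^2 + dist O b ^ 2 := by
    set ι : Fin 3 → Fin 4 := Fin.castLE (by norm_num)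
    refine aux O a b s t ((R+r)/2) ((R-r)/2) hperp' hAne hBne
      (fun i => (d (ι i)).1) (fun i => ?_) (fun i => ?_) (fun i => ?_)
      (fun i j hij hc => ?_)
    · have h1 := (hdprop (ι i)).2.1.1
      rw [h1, hρd (ι i)]; ring
    · rcases (hdprop (ι i)).2.2.1.2 with h | h
      · left
        have h' : dist (d (ι i)).1 a = (d (ι i)).2 + s := h
        rw [h', hρd (ι i)]
      · right
        have h' : dist (d (ι i)).1 a = |(d (ι i)).2 - s| := h
        rw [h', sq_abs, hρd (ι i)]
    · rcases (hdprop (ι i)).2.2.2.2 with h | h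
      · left
        have h' : dist (d (ι i)).1 b = (d (ι i)).2 + t := h
        rw [h', hρd (ι i)]
      · right
        have h' : dist (d (ι i)).1 b = |(d (ι i)).2 - t| := h
        rw [h', sq_abs, hρd (ι i)]
    · exact hdinj (ι i) (ι j) (fun h => hij (Fin.castLE_injective _ h))
        (Prod.ext hc ((hρd (ι i)).trans (hρd (ι j)).symm))
  -- Type A solutions: radius (R-r)/2, center at distance (R+r)/2 from O
  have hρe : ∀ i : Fin 3, (e i).2 = (R-r)/2 := by
    intro i
    have h1 := (heprop i).2.1.1
    have h2 := (heprop i).2.1.2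
    linarith
  have hAres : ((R-r)/2)^2 + t^2 = ((R+r)/2)^2 + dist O b ^ 2 := by
    refine aux O a b s t ((R-r)/2) ((R+r)/2) hperp' hAne hBne
      (fun i => (e i).1) (fun i => ?_) (fun i => ?_) (fun i => ?_)
      (fun i j hij hc => ?_)
    · have h1 := (heprop i).2.1.1
      rw [h1, hρe i]; ring
    · rcases (heprop i).2.2.1.2 with h | h
      · left
        have h' : dist (e i).1 a = (e i).2 + s := h
        rw [h', hρe i]
      · right
        have h' : dist (e i).1 a = |(e i).2 - s| := h
        rw [h', sq_abs, hρe i]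
    · rcases (heprop i).2.2.2.2 with h | h
      · left
        have h' : dist (e i).1 b = (e i).2 + t := h
        rw [h', hρe i]
      · right
        have h' : dist (e i).1 b = |(e i).2 - t| := h
        rw [h', sq_abs, hρe i]
    · exact heinj i j hij (Prod.ext hc ((hρe i).trans (hρe j).symm))
  have hRr : R * r = 0 := by linear_combination (hBres - hAres)/2
  exact (mul_pos (hr.trans hrR) hr).ne' hRr
end
end

section
/- Consider the two parallel lines {p ∈ ℝ² | p₂ = 0} and {p ∈ ℝ² | p₂ = 2}; the circles tangent to both are exactly the unit circles whose center has second coordinate 1. Let α = (a, s) and β = (b, t) be circles. If there exist four pairwise distinct real numbers x₁, x₂, x₃, x₄ such that for each i the unit circle with center (xᵢ, 1) is tangent to α and tangent to β, then the first coordinates of a and b coincide (the centers of α and β lie on a common line perpendicular to the two parallel lines). -/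
noncomputable section

/-- The point of the plane with the given coordinates. -/
def pt (x y : ℝ) : Plane := WithLp.toLp 2 ![x, y]

lemma sum_four {e1 e2 e3 e4 : ℝ} (h : ({e1, e2, e3, e4} : Finset ℝ).card = 4) :
    ∑ y ∈ ({e1, e2, e3, e4} : Finset ℝ), y = e1 + e2 + e3 + e4 := by
  have hle : ∀ u v w : ℝ, ({u, v, w} : Finset ℝ).card ≤ 3 := by
    intro u v w
    calc ({u, v, w} : Finset ℝ).card ≤ ({v, w} : Finset ℝ).card + 1 :=
          Finset.card_insert_le _ _
      _ ≤ (({w} : Finset ℝ).card + 1) + 1 := by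
          exact Nat.add_le_add_right (Finset.card_insert_le _ _) 1
      _ ≤ 3 := by simp
  have key2 : ∀ u v w z : ℝ, u = v → ({u, v, w, z} : Finset ℝ).card ≠ 4 := by
    intro u v w z he hc
    have : ({u, v, w, z} : Finset ℝ) = {v, w, z} := by
      ext y; simp [he]; try tauto
    rw [this] at hc; have := hle v w z; omega
  have h12 : e1 ≠ e2 := fun he => key2 e1 e2 e3 e4 he h
  have h13 : e1 ≠ e3 := by
    intro he
    have : ({e1, e2, e3, e4} : Finset ℝ) = {e2, e3, e4} := by
      ext y; simp [he]; try tauto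
    rw [this] at h; have := hle e2 e3 e4; omega
  have h14 : e1 ≠ e4 := by
    intro he
    have : ({e1, e2, e3, e4} : Finset ℝ) = {e2, e3, e4} := by
      ext y; simp [he]; try tauto
    rw [this] at h; have := hle e2 e3 e4; omega
  have h23 : e2 ≠ e3 := by
    intro he
    have : ({e1, e2, e3, e4} : Finset ℝ) = {e1, e3, e4} := by
      ext y; simp [he]; try tauto
    rw [this] at h; have := hle e1 e3 e4; omega
  have h24 : e2 ≠ e4 := by
    intro he
    have : ({e1, e2, e3, e4} : Finset ℝ) = {e1, e3, e4} := by
      ext y; simp [he]; try tauto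
    rw [this] at h; have := hle e1 e3 e4; omega
  have h34 : e3 ≠ e4 := by
    intro he
    have : ({e1, e2, e3, e4} : Finset ℝ) = {e1, e2, e4} := by
      ext y; simp [he]; try tauto
    rw [this] at h; have := hle e1 e2 e4; omega
  rw [Finset.sum_insert (by simp [h12, h13, h14]),
    Finset.sum_insert (by simp [h23, h24]),
    Finset.sum_insert (by simp [h34]), Finset.sum_singleton]
  ring

lemma key (a : Plane) (s : ℝ) (x : Fin 4 → ℝ) (hinj : Function.Injective x)
    (h : ∀ i, dist (pt (x i) 1) a = 1 + s ∨ dist (pt (x i) 1) a = |1 - s|) :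
    ∑ i, x i = 4 * a 0 := by
  set P : ℝ := (1 + s) ^ 2 - (1 - a 1) ^ 2 with hP
  set Q : ℝ := (1 - s) ^ 2 - (1 - a 1) ^ 2 with hQ
  have hdist : ∀ i, dist (pt (x i) 1) a ^ 2 = (x i - a 0) ^ 2 + (1 - a 1) ^ 2 := by
    intro i
    rw [EuclideanSpace.dist_eq]
    rw [Real.sq_sqrt (by positivity)]
    simp [Fin.sum_univ_two, pt, Real.dist_eq, sq_abs]
  have hsq : ∀ i, (x i - a 0) ^ 2 = P ∨ (x i - a 0) ^ 2 = Q := by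
    intro i
    rcases h i with h' | h'
    · left
      have := hdist i
      rw [h'] at this
      rw [hP]; nlinarith [this]
    · right
      have := hdist i
      rw [h'] at this
      rw [hQ, ← sq_abs (1 - s)]; nlinarith [this]
  set S : Finset ℝ := {a 0 - Real.sqrt P, a 0 + Real.sqrt P,
    a 0 - Real.sqrt Q, a 0 + Real.sqrt Q} with hS
  have hmem : ∀ i, x i ∈ S := by
    intro i
    have mem_of : ∀ R : ℝ, (x i - a 0) ^ 2 = R →
        x i = a 0 - Real.sqrt R ∨ x i = a 0 + Real.sqrt R := by
      intro R hR
      have habs : |x i - a 0| = Real.sqrt R := by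
        rw [← Real.sqrt_sq_eq_abs, hR]
      rcases (abs_eq (Real.sqrt_nonneg R)).mp habs with h' | h'
      · right; linarith
      · left; linarith
    rcases hsq i with h' | h'
    · rcases mem_of P h' with h'' | h'' <;> simp [hS, h'']
    · rcases mem_of Q h' with h'' | h'' <;> simp [hS, h'']
  have hT : (Finset.univ.image x).card = 4 := by
    rw [Finset.card_image_of_injective _ hinj, Finset.card_univ, Fintype.card_fin]
  have hsub : Finset.univ.image x ⊆ S := by
    intro y hy
    rcases Finset.mem_image.mp hy with ⟨i, _, rfl⟩
    exact hmem i
  have hScard : S.card ≤ 4 := by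
    calc S.card ≤ ({a 0 + Real.sqrt P, a 0 - Real.sqrt Q, a 0 + Real.sqrt Q} : Finset ℝ).card + 1 :=
          Finset.card_insert_le _ _
      _ ≤ (({a 0 - Real.sqrt Q, a 0 + Real.sqrt Q} : Finset ℝ).card + 1) + 1 :=
          Nat.add_le_add_right (Finset.card_insert_le _ _) 1
      _ ≤ ((({a 0 + Real.sqrt Q} : Finset ℝ).card + 1) + 1) + 1 := by
          exact Nat.add_le_add_right (Nat.add_le_add_right (Finset.card_insert_le _ _) 1) 1
      _ ≤ 4 := by simp
  have hTS : Finset.univ.image x = S :=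
    Finset.eq_of_subset_of_card_le hsub (by omega)
  have hS4 : S.card = 4 := by rw [← hTS]; exact hT
  have hsum : ∑ y ∈ S, y = 4 * a 0 := by
    rw [hS] at hS4 ⊢
    rw [sum_four hS4]
    ring
  have himg : ∑ y ∈ Finset.univ.image x, y = ∑ i, x i :=
    Finset.sum_image (fun i _ j _ h => hinj h)
  rw [← himg, hTS]
  exact hsum

/-- Lemma 12: if two circles are tangent to four distinct unit circles inscribed between
the parallel lines y = 0 and y = 2, then their centers lie on a common vertical line. -/
theorem four_common_solutions_between_parallel_lines
    (a b : Plane) (s t : ℝ) (hs : 0 < s) (ht : 0 < t)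
    (x : Fin 4 → ℝ) (hinj : Function.Injective x)
    (htan : ∀ i, Tangent (pt (x i) 1, 1) (a, s) ∧ Tangent (pt (x i) 1, 1) (b, t)) :
    a 0 = b 0 := by
  have ha := key a s x hinj (fun i => (htan i).1.2)
  have hb := key b t x hinj (fun i => (htan i).2.2)
  linarith
end
end
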